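/- arXiv:1703.02674 — 7 statements merged into one kernel-verified Lean document; each statement's English description precedes it below -/
import Mathlib

section
/- Let A be a real n×m matrix with full row rank n, and let k be an integer with n ≤ k ≤ m. Then the sum over all subsets S of {1,…,m} of cardinality k of det(A_S A_Sᵀ) equals the binomial coefficient C(m−n, k−n) times det(A Aᵀ); that is, ∑_{S ⊆ {1,…,m}, |S| = k} det(A_S A_Sᵀ) = C(m−n, k−n) · det(A Aᵀ). -/
/-!
Writing `A_S A_Sᵀ = A · diag(1_S) · Aᵀ`, Cauchy–Binet expands `det(A_S A_Sᵀ)` as the sum of the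
squared maximal minors `det(A_T)²` over the `n`-subsets `T ⊆ S`. Summing over all `k`-subsets `S`,
each `T` is counted once for every `k`-set containing it, that is `C(m - n, k - n)` times, and the
remaining sum of all squared maximal minors is `det(A Aᵀ)` by Cauchy–Binet once more.
-/

open Matrix BigOperators

/-- The n×n Gram matrix `A_S * A_Sᵀ` of the columns of `A` indexed by `S`. -/
def dvsGram {n m : ℕ} (A : Matrix (Fin n) (Fin m) ℝ) (S : Finset (Fin m)) :
    Matrix (Fin n) (Fin n) ℝ :=
  Matrix.of fun i j => ∑ t ∈ S, A i t * A j t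

open Set.powersetCard exteriorPower

theorem Set.powersetCard.prod_ofFinEmbEquiv_symm {α M : Type*} [LinearOrder α] [CommMonoid M]
    {n : ℕ} (s : Set.powersetCard α n) (f : α → M) :
    ∏ i, f (ofFinEmbEquiv.symm s i) = ∏ t ∈ (s : Finset α), f t := by
  rw [← Finset.prod_coe_sort (s : Finset α) f]
  exact Fintype.prod_equiv ((s : Finset α).orderIsoOfFin s.prop).toEquiv _ _ fun _ => rfl

namespace Matrix

variable {R : Type*} [CommRing R] {ι : Type*} [Fintype ι] [LinearOrder ι] {n : ℕ}

/-- The Cauchy–Binet formula. -/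
theorem det_mul_eq_sum_det_submatrix (B : Matrix (Fin n) ι R) (C : Matrix ι (Fin n) R) :
    (B * C).det = ∑ s : Set.powersetCard ι n,
      (B.submatrix id (ofFinEmbEquiv.symm s)).det *
        (C.submatrix (ofFinEmbEquiv.symm s) id).det := by
  -- Pair the wedge of the rows of `B` (as linear forms) with the wedge of the columns of `C`,
  -- and expand the latter in the standard basis of `⋀ⁿ (ι → R)`.
  let b := Pi.basisFun R ι
  let f : Fin n → Module.Dual R (ι → R) := fun i => (LinearMap.proj i).comp B.mulVecLin
  let v : Fin n → ι → R := fun j t => C t j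
  have hpair : (B * C).det = pairingDual R (ι → R) n (ιMulti R n f) (ιMulti R n v) := by
    rw [pairingDual_ιMulti_ιMulti, ← det_transpose]
    rfl
  rw [hpair, ← (b.exteriorPower n).sum_repr (ιMulti R n v), map_sum]
  refine Finset.sum_congr rfl fun s _ => ?_
  rw [map_smul, basis_repr_apply, ιMultiDual_apply_ιMulti, basis_apply, ιMulti_family,
    pairingDual_ιMulti_ιMulti, smul_eq_mul, mul_comm, ← det_transpose,
    ← det_transpose (C.submatrix _ _)]
  congr 2
  ext i j
  simp [f, b, mulVec, dotProduct, Pi.single_apply]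

theorem det_mul_diagonal_mul_transpose (A : Matrix (Fin n) ι R) (w : ι → R) :
    (A * diagonal w * Aᵀ).det = ∑ s : Set.powersetCard ι n,
      (∏ t ∈ (s : Finset ι), w t) * (A.submatrix id (ofFinEmbEquiv.symm s)).det ^ 2 := by
  rw [Matrix.mul_assoc, det_mul_eq_sum_det_submatrix]
  refine Finset.sum_congr rfl fun s _ => ?_
  have hrows : (diagonal w * Aᵀ).submatrix (ofFinEmbEquiv.symm s) id
      = diagonal (w ∘ ofFinEmbEquiv.symm s) * (A.submatrix id (ofFinEmbEquiv.symm s))ᵀ := by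
    ext i j
    simp [diagonal_mul]
  rw [hrows, det_mul, det_diagonal, det_transpose]
  simp only [Function.comp_apply, prod_ofFinEmbEquiv_symm]
  ring

theorem det_mul_transpose_eq_sum_sq (A : Matrix (Fin n) ι R) :
    (A * Aᵀ).det = ∑ s : Set.powersetCard ι n, (A.submatrix id (ofFinEmbEquiv.symm s)).det ^ 2 := by
  simpa using det_mul_diagonal_mul_transpose A 1

end Matrix

theorem dvsGram_eq_mul_diagonal_mul_transpose {n m : ℕ} (A : Matrix (Fin n) (Fin m) ℝ)
    (S : Finset (Fin m)) :
    dvsGram A S = A * diagonal (fun t => if t ∈ S then (1 : ℝ) else 0) * Aᵀ := by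
  ext i j
  simp [dvsGram, Matrix.mul_apply, diagonal, Finset.sum_ite_mem, mul_comm]

theorem det_dvsGram {n m : ℕ} (A : Matrix (Fin n) (Fin m) ℝ) (S : Finset (Fin m)) :
    (dvsGram A S).det = ∑ s : Set.powersetCard (Fin m) n,
      if (s : Finset (Fin m)) ⊆ S then (A.submatrix id (ofFinEmbEquiv.symm s)).det ^ 2
      else 0 := by
  rw [dvsGram_eq_mul_diagonal_mul_transpose, det_mul_diagonal_mul_transpose]
  simp [Finset.prod_boole, Finset.subset_iff]

theorem dvs_partition_function_general {n m : ℕ} (A : Matrix (Fin n) (Fin m) ℝ)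
    (k : ℕ) (hnk : n ≤ k) :
    ∑ S ∈ Finset.univ.powersetCard k, (dvsGram A S).det
      = ((m - n).choose (k - n) : ℝ) * (A * Aᵀ).det := by
  simp_rw [det_dvsGram, det_mul_transpose_eq_sum_sq, Finset.mul_sum]
  rw [Finset.sum_comm]
  refine Finset.sum_congr rfl fun s _ => ?_
  rw [← Finset.sum_filter, Finset.sum_const, nsmul_eq_mul,
    Finset.card_filter_powersetCard_subset _ _ _ (Finset.subset_univ _) (by simpa using hnk)]
  simp

/-- **Partition function of dual volume sampling.**  For a real `n × m` matrix `A` of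
full row rank `n` and `n ≤ k ≤ m`,
`∑_{|S| = k} det(A_S A_Sᵀ) = C(m - n, k - n) ⋅ det(A Aᵀ)`. -/
theorem dvs_partition_function {n m : ℕ} (A : Matrix (Fin n) (Fin m) ℝ)
    (hA : A.rank = n) (k : ℕ) (hnk : n ≤ k) (hkm : k ≤ m) :
    ∑ S ∈ Finset.univ.powersetCard k, (dvsGram A S).det
      = ((m - n).choose (k - n) : ℝ) * (A * Aᵀ).det :=
  dvs_partition_function_general A k hnk
end

section
/- Let A be a real n×m matrix with full row rank n, let k be an integer with n ≤ k ≤ m, and let T ⊆ {1,…,m} with |T| ≤ k be such that the submatrix A_T has rank n (so A_T A_Tᵀ is invertible). Let T_c = {1,…,m} \ T. Then ∑_{S : T ⊆ S ⊆ {1,…,m}, |S| = k} det(A_S A_Sᵀ) = det(A_T A_Tᵀ) · e_{k−|T|}( I_{|T_c|} + A_{T_c}ᵀ (A_T A_Tᵀ)^{-1} A_{T_c} ), where e_j(M) denotes the sum of the determinants of all j×j principal submatrices of the square matrix M. -/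
open Matrix BigOperators

/-- The `n × |T|` submatrix of `A` formed by the columns indexed by `T`. -/
def dvsCols {n m : ℕ} (A : Matrix (Fin n) (Fin m) ℝ) (T : Finset (Fin m)) :
    Matrix (Fin n) {x // x ∈ T} ℝ :=
  A.submatrix id (fun p => p.1)

/-! Every `S ⊇ T` with `|S| = k` is `T ∪ R` for a unique `R ⊆ T_c` with `|R| = k - |T|`,
and then `A_S A_Sᵀ = G + A_R A_Rᵀ` with `G = A_T A_Tᵀ` invertible. The matrix determinant
lemma gives `det (G + A_R A_Rᵀ) = det G · det (I + A_Rᵀ G⁻¹ A_R)`, and `I + A_Rᵀ G⁻¹ A_R`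
is the principal submatrix on `R` of `I + A_{T_c}ᵀ G⁻¹ A_{T_c}`. -/

theorem Matrix.isUnit_of_rank_eq_card {K ι : Type*} [Field K] [Fintype ι] [DecidableEq ι]
    {M : Matrix ι ι K} (h : M.rank = Fintype.card ι) : IsUnit M := by
  rw [← mulVec_surjective_iff_isUnit, ← coe_mulVecLin, ← LinearMap.range_eq_top]
  apply Submodule.eq_top_of_finrank_eq
  simpa [rank] using h

theorem Matrix.submatrix_one_add_transpose_mul_mul {α ι κ ν : Type*} [Semiring α]
    [Fintype ν] [DecidableEq ι] [DecidableEq κ] (C : Matrix ν ι α) (G : Matrix ν ν α)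
    {e : κ → ι} (he : Function.Injective e) :
    (1 + Cᵀ * G * C).submatrix e e = 1 + (C.submatrix id e)ᵀ * G * C.submatrix id e := by
  ext i j
  simp [mul_apply, one_apply, he.eq_iff]

theorem Finset.sum_powersetCard_eq_sum_powersetCard_subtype {α M : Type*} [DecidableEq α]
    [AddCommMonoid M] (s : Finset α) (j : ℕ) (f : Finset α → M) :
    ∑ R ∈ s.powersetCard j, f R
      = ∑ R ∈ (univ.powersetCard j : Finset (Finset s)),
          f (R.map (Function.Embedding.subtype _)) := by
  conv_lhs => rw [← attach_map_val (s := s), powersetCard_map, sum_map]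
  rw [univ_eq_attach]
  rfl

theorem Finset.sum_powersetCard_filter_superset {α M : Type*} [Fintype α] [DecidableEq α]
    [AddCommMonoid M] {T : Finset α} {k : ℕ} (hT : T.card ≤ k) (f : Finset α → M) :
    ∑ S ∈ (univ.powersetCard k).filter (T ⊆ ·), f S
      = ∑ R ∈ Tᶜ.powersetCard (k - T.card), f (T ∪ R) := by
  have hdisj {R : Finset α} (hR : R ⊆ Tᶜ) : Disjoint T R :=
    subset_compl_iff_disjoint_left.mp hR
  refine Finset.sum_nbij' (· \ T) (T ∪ ·) ?_ ?_ ?_ ?_ ?_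
  · intro S hS
    simp only [mem_filter, mem_powersetCard_univ] at hS
    rw [mem_powersetCard, card_sdiff_of_subset hS.2, hS.1, sdiff_eq_inter_compl]
    exact ⟨inter_subset_right, rfl⟩
  · intro R hR
    rw [mem_powersetCard] at hR
    simp only [mem_filter, mem_powersetCard_univ, card_union_of_disjoint (hdisj hR.1), hR.2]
    exact ⟨by omega, subset_union_left⟩
  · intro S hS
    simp only [mem_filter, mem_powersetCard_univ] at hS
    exact union_sdiff_of_subset hS.2
  · intro R hR
    rw [mem_powersetCard] at hR
    exact union_sdiff_cancel_left (hdisj hR.1)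
  · intro S hS
    simp only [mem_filter, mem_powersetCard_univ] at hS
    rw [union_sdiff_of_subset hS.2]

section dvsGram

variable {n m : ℕ} (A : Matrix (Fin n) (Fin m) ℝ)

theorem dvsGram_union {S S' : Finset (Fin m)} (h : Disjoint S S') :
    dvsGram A (S ∪ S') = dvsGram A S + dvsGram A S' := by
  ext i j
  simp only [dvsGram, of_apply, Matrix.add_apply, Finset.sum_union h]

theorem dvsGram_map {β : Type*} (e : β ↪ Fin m) (R : Finset β) :
    dvsGram A (R.map e)
      = A.submatrix id (fun p : R => e p) * (A.submatrix id (fun p : R => e p))ᵀ := by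
  ext i j
  simp only [dvsGram, of_apply, Finset.sum_map, mul_apply, transpose_apply, submatrix_apply, id_eq]
  exact (Finset.sum_coe_sort R fun b => A i (e b) * A j (e b)).symm

theorem dvsGram_eq_dvsCols_mul_transpose (T : Finset (Fin m)) :
    dvsGram A T = dvsCols A T * (dvsCols A T)ᵀ := by
  have h := dvsGram_map A (Function.Embedding.refl _) T
  rwa [Finset.map_refl] at h

theorem isUnit_det_dvsGram {T : Finset (Fin m)} (hT : (dvsCols A T).rank = n) :
    IsUnit (dvsGram A T).det := by
  rw [← isUnit_iff_isUnit_det]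
  apply isUnit_of_rank_eq_card
  rw [dvsGram_eq_dvsCols_mul_transpose, rank_self_mul_transpose, hT, Fintype.card_fin]

theorem det_dvsGram_union_map_subtype {T : Finset (Fin m)} (hG : IsUnit (dvsGram A T).det)
    (R : Finset {x // x ∈ Tᶜ}) :
    (dvsGram A (T ∪ R.map (Function.Embedding.subtype _))).det
      = (dvsGram A T).det *
        ((1 + (dvsCols A Tᶜ)ᵀ * (dvsGram A T)⁻¹ * dvsCols A Tᶜ).submatrix
          (fun p : R => p.1) (fun p : R => p.1)).det := by
  have hdisj : Disjoint T (R.map (Function.Embedding.subtype _)) := by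
    simpa [Finset.disjoint_left] using fun _ hx hx' => (hx' hx).elim
  rw [dvsGram_union A hdisj, dvsGram_map, det_add_mul _ _ hG,
    submatrix_one_add_transpose_mul_mul _ _ Subtype.val_injective]
  rfl

end dvsGram

theorem dvs_marginal_general {n m : ℕ} (A : Matrix (Fin n) (Fin m) ℝ)
    (k : ℕ)
    (T : Finset (Fin m)) (hTk : T.card ≤ k) (hT : (dvsCols A T).rank = n) :
    ∑ S ∈ (Finset.univ.powersetCard k).filter (fun S => T ⊆ S), (dvsGram A S).det
      = (dvsGram A T).det *
        ∑ R ∈ (Finset.univ.powersetCard (k - T.card) : Finset (Finset {x // x ∈ Tᶜ})),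
          ((((1 : Matrix {x // x ∈ Tᶜ} {x // x ∈ Tᶜ} ℝ)
              + (dvsCols A Tᶜ)ᵀ * (dvsGram A T)⁻¹ * dvsCols A Tᶜ)).submatrix
            (fun p : {y // y ∈ R} => p.1) (fun p : {y // y ∈ R} => p.1)).det := by
  rw [Finset.sum_powersetCard_filter_superset hTk,
    Finset.sum_powersetCard_eq_sum_powersetCard_subtype, Finset.mul_sum]
  exact Finset.sum_congr rfl fun R _ =>
    det_dvsGram_union_map_subtype A (isUnit_det_dvsGram A hT) R

/-- **Marginals of dual volume sampling.**  For a full-row-rank real `n × m` matrix `A`,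
`n ≤ k ≤ m`, and `T ⊆ {1,…,m}` with `|T| ≤ k` such that `A_T` has rank `n`,
`∑_{T ⊆ S, |S| = k} det(A_S A_Sᵀ)
  = det(A_T A_Tᵀ) ⋅ e_{k - |T|}( I + A_{T_c}ᵀ (A_T A_Tᵀ)⁻¹ A_{T_c} )`,
where `T_c = {1,…,m} \ T` and `e_j(M) = ∑_{|R| = j} det(M_{R,R})`. -/
theorem dvs_marginal {n m : ℕ} (A : Matrix (Fin n) (Fin m) ℝ) (hA : A.rank = n)
    (k : ℕ) (hnk : n ≤ k) (hkm : k ≤ m)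
    (T : Finset (Fin m)) (hTk : T.card ≤ k) (hT : (dvsCols A T).rank = n) :
    ∑ S ∈ (Finset.univ.powersetCard k).filter (fun S => T ⊆ S), (dvsGram A S).det
      = (dvsGram A T).det *
        ∑ R ∈ (Finset.univ.powersetCard (k - T.card) : Finset (Finset {x // x ∈ Tᶜ})),
          ((((1 : Matrix {x // x ∈ Tᶜ} {x // x ∈ Tᶜ} ℝ)
              + (dvsCols A Tᶜ)ᵀ * (dvsGram A T)⁻¹ * dvsCols A Tᶜ)).submatrix
            (fun p : {y // y ∈ R} => p.1) (fun p : {y // y ∈ R} => p.1)).det :=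
  dvs_marginal_general A k T hTk hT
end

section
/- Let B be an N×N complex Hermitian matrix and let A_1, …, A_m be N×N complex Hermitian positive semidefinite matrices. Define f(z) = det(B + ∑_{i=1}^m z_i A_i) as a polynomial in z = (z_1,…,z_m). Then either f is identically zero, or f(z) ≠ 0 for every z ∈ ℂ^m with Im(z_i) > 0 for all i = 1,…,m. -/
open Matrix BigOperators
open scoped ComplexOrder

/-!
If `(B + ∑ zᵢ Mᵢ) v = 0` with every `Im zᵢ > 0`, then taking the imaginary part of
`v* (B + ∑ zᵢ Mᵢ) v = 0` gives `∑ Im zᵢ · v* Mᵢ v = 0`, because `v* B v` and each `v* Mᵢ v`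
are real. The terms are nonnegative, so every `v* Mᵢ v` vanishes, hence `Mᵢ v = 0`, and then
`B v = 0`. Thus `v` lies in the kernel of `B + ∑ wᵢ Mᵢ` for every `w ∈ ℂᵐ`: a single zero in
the upper half-plane forces the determinant to vanish identically.
-/

namespace Matrix

variable {n ι : Type*} [Fintype n] [Fintype ι]

lemma add_sum_smul_mulVec (B : Matrix n n ℂ) (M : ι → Matrix n n ℂ) (z : ι → ℂ) (v : n → ℂ) :
    (B + ∑ i, z i • M i) *ᵥ v = B *ᵥ v + ∑ i, z i • M i *ᵥ v := by
  simp only [add_mulVec, sum_mulVec, smul_mulVec]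

lemma im_star_dotProduct_add_sum_smul_mulVec {B : Matrix n n ℂ} (hB : B.IsHermitian)
    {M : ι → Matrix n n ℂ} (hM : ∀ i, (M i).IsHermitian) (z : ι → ℂ) (v : n → ℂ) :
    (star v ⬝ᵥ (B + ∑ i, z i • M i) *ᵥ v).im = ∑ i, (z i).im * (star v ⬝ᵥ M i *ᵥ v).re := by
  have hBv : (star v ⬝ᵥ B *ᵥ v).im = 0 := hB.im_star_dotProduct_mulVec_self v
  have hMv (i : ι) : (star v ⬝ᵥ M i *ᵥ v).im = 0 := (hM i).im_star_dotProduct_mulVec_self v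
  simp only [add_sum_smul_mulVec, dotProduct_add, dotProduct_sum, dotProduct_smul, smul_eq_mul,
    Complex.add_im, Complex.im_sum, Complex.mul_im, hBv, hMv, mul_zero, zero_add]

lemma mulVec_eq_zero_of_add_sum_smul_mulVec_eq_zero {B : Matrix n n ℂ} (hB : B.IsHermitian)
    {M : ι → Matrix n n ℂ} (hM : ∀ i, (M i).PosSemidef) {z : ι → ℂ} (hz : ∀ i, 0 < (z i).im)
    {v : n → ℂ} (hv : (B + ∑ i, z i • M i) *ᵥ v = 0) :
    B *ᵥ v = 0 ∧ ∀ i, M i *ᵥ v = 0 := by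
  have hq (i : ι) : 0 ≤ star v ⬝ᵥ M i *ᵥ v := (hM i).dotProduct_mulVec_nonneg v
  have hsum : ∑ i, (z i).im * (star v ⬝ᵥ M i *ᵥ v).re = 0 := by
    rw [← im_star_dotProduct_add_sum_smul_mulVec hB (fun i ↦ (hM i).isHermitian), hv,
      dotProduct_zero, Complex.zero_im]
  have hre (i : ι) : (star v ⬝ᵥ M i *ᵥ v).re = 0 := by
    have hterms := Finset.sum_eq_zero_iff_of_nonneg
      (fun j _ ↦ mul_nonneg (hz j).le (Complex.le_def.mp (hq j)).1) |>.mp hsum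
    exact (mul_eq_zero.mp (hterms i (Finset.mem_univ i))).resolve_left (hz i).ne'
  have hMv (i : ι) : M i *ᵥ v = 0 :=
    ((hM i).dotProduct_mulVec_zero_iff v).mp (Complex.ext (hre i) (Complex.le_def.mp (hq i)).2.symm)
  refine ⟨?_, hMv⟩
  simpa [add_sum_smul_mulVec, hMv] using hv

end Matrix

/-- **Borcea–Brändén determinantal stability.**  If `B` is Hermitian and
`A_1, …, A_m` are Hermitian positive semidefinite `N × N` complex matrices, then
`f(z) = det(B + ∑ i, z_i A_i)` is either identically zero or nonvanishing whenever
every `z_i` has positive imaginary part (i.e., `f` is stable). -/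
theorem det_hermitian_psd_combination_stable {N m : ℕ}
    (B : Matrix (Fin N) (Fin N) ℂ) (hB : B.IsHermitian)
    (M : Fin m → Matrix (Fin N) (Fin N) ℂ) (hM : ∀ i, (M i).PosSemidef) :
    (∀ z : Fin m → ℂ, (B + ∑ i, z i • M i).det = 0) ∨
    (∀ z : Fin m → ℂ, (∀ i, 0 < (z i).im) → (B + ∑ i, z i • M i).det ≠ 0) := by
  refine or_iff_not_imp_right.mpr fun hzero w ↦ ?_
  push Not at hzero
  obtain ⟨z, hz, hdet⟩ := hzero
  obtain ⟨v, hv0, hv⟩ := exists_mulVec_eq_zero_iff.mpr hdet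
  obtain ⟨hBv, hMv⟩ := mulVec_eq_zero_of_add_sum_smul_mulVec_eq_zero hB hM hz hv
  exact exists_mulVec_eq_zero_iff.mp ⟨v, hv0, by simp [add_sum_smul_mulVec, hBv, hMv]⟩
end

section
/- Let A be a real n×m matrix with full row rank n and n ≤ m, and let L = Aᵀ A. Then the polynomial in m+1 complex variables g(z, y) = ∑_{S ⊆ {1,…,m}, |S| ≥ n} e_n(L_{S,S}) · y^{|S|−n} · ∏_{i ∉ S} z_i is real stable; in particular, g(z, y) ≠ 0 whenever Im(y) > 0 and Im(z_i) > 0 for all i = 1,…,m. -/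
/-!
Grouping the terms of `g` by an `n`-subset `T ⊆ S` gives
`g(z, y) = ∑_{|T| = n} det L_{T,T} ∏_{i ∉ T} (y + z_i)`. With `w_i = (y + z_i)⁻¹` this is
`∏ (y + z_i) · ∑_{|T| = n} (∏_{i ∈ T} w_i) det L_{T,T} = ∏ (y + z_i) · det (A diag(w) Aᵀ)`
by Cauchy–Binet, which follows by comparing the coefficients of `Xⁿ` in Sylvester's identity
`det (1 + X • B C) = det (1 + X • C B)`. Finally `Im w_i < 0` and `A` has full row rank, so
`A diag(w) Aᵀ` is nonsingular.
-/

open Matrix Finset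

namespace Finset

variable {R ι : Type*} [CommSemiring R] [Fintype ι] [DecidableEq ι]

theorem prod_compl_add_eq_sum_superset (T : Finset ι) (y : R) (z : ι → R) :
    ∏ i ∈ Tᶜ, (y + z i) = ∑ S ∈ univ.filter (T ⊆ ·), y ^ (#S - #T) * ∏ i ∈ Sᶜ, z i := by
  rw [prod_add]
  refine sum_nbij' (T ∪ ·) (· \ T) (by simp) (by simp) ?_ ?_ ?_
  · intro U hU
    rw [mem_powerset, subset_compl_iff_disjoint_left] at hU
    exact union_sdiff_cancel_left hU
  · intro S hS
    exact union_sdiff_of_subset (mem_filter.mp hS).2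
  · intro U hU
    rw [mem_powerset, subset_compl_iff_disjoint_left] at hU
    rw [card_union_of_disjoint hU, Nat.add_sub_cancel_left, prod_const, compl_union, sdiff_eq]
    rfl

theorem sum_sum_powersetCard_mul_pow_mul_prod_compl (n : ℕ) (d : Finset ι → R) (y : R)
    (z : ι → R) :
    ∑ S ∈ univ.filter (n ≤ #·), (∑ T ∈ S.powersetCard n, d T) * y ^ (#S - n) * ∏ i ∈ Sᶜ, z i
      = ∑ T ∈ univ.powersetCard n, d T * ∏ i ∈ Tᶜ, (y + z i) := by
  simp_rw [sum_mul, prod_compl_add_eq_sum_superset, mul_sum]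
  refine (sum_comm' fun S T => ?_).trans
    (sum_congr rfl fun T hT => sum_congr rfl fun S _ => ?_)
  · simp only [mem_filter, mem_univ, true_and, mem_powersetCard, subset_univ]
    exact ⟨fun ⟨_, hTS, hT⟩ => ⟨hTS, hT⟩, fun ⟨hTS, hT⟩ => ⟨hT ▸ card_le_card hTS, hTS, hT⟩⟩
  · rw [mem_powersetCard_univ.mp hT, mul_assoc]

end Finset

namespace Matrix

theorem conjTranspose_map_ofReal {κ ι : Type*} (A : Matrix κ ι ℝ) :
    (A.map Complex.ofRealHom)ᴴ = Aᵀ.map Complex.ofRealHom := by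
  ext; simp

variable {R κ ι : Type*} [Fintype κ] [DecidableEq κ] [Fintype ι]

theorem isUnit_of_rank_eq_card_s8 [Field R] {M : Matrix κ κ R} (h : M.rank = Fintype.card κ) :
    IsUnit M := by
  have hrange : LinearMap.range M.mulVecLin = ⊤ :=
    Submodule.eq_top_of_finrank_eq (by rw [Module.finrank_fintype_fun_eq_card]; exact h)
  exact mulVec_surjective_iff_isUnit.mp (LinearMap.range_eq_top.mp hrange)

theorem det_map_ofReal_mul_conjTranspose_ne_zero (A : Matrix κ ι ℝ)
    (hA : A.rank = Fintype.card κ) :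
    (A.map Complex.ofRealHom * (A.map Complex.ofRealHom)ᴴ).det ≠ 0 := by
  have hunit : IsUnit (A * Aᵀ) := isUnit_of_rank_eq_card_s8 (by rw [rank_self_mul_transpose, hA])
  rw [conjTranspose_map_ofReal, ← Matrix.map_mul, ← RingHom.mapMatrix_apply, ← RingHom.map_det]
  exact (_root_.map_ne_zero _).mpr ((isUnit_iff_isUnit_det _).mp hunit).ne_zero

variable [DecidableEq ι]

open Polynomial in
theorem det_mul_eq_sum_principal_minors_mul_comm [CommRing R]
    (B : Matrix κ ι R) (C : Matrix ι κ R) :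
    (B * C).det = ∑ T ∈ univ.powersetCard (Fintype.card κ),
      ((C * B).submatrix (Subtype.val : T → ι) Subtype.val).det := by
  have h := det_one_add_mul_comm ((X : R[X]) • B.map Polynomial.C) (C.map Polynomial.C)
  rw [Matrix.smul_mul, Matrix.mul_smul, ← Matrix.map_mul, ← Matrix.map_mul] at h
  have hcoeff := congrArg (coeff · (Fintype.card κ)) h
  simp only [coeff_det_one_add_X_smul_eq_sum_minors] at hcoeff
  rw [← hcoeff, ← card_univ, powersetCard_self, sum_singleton]
  exact (det_submatrix_equiv_self (Equiv.subtypeUnivEquiv mem_univ) _).symm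

theorem det_submatrix_diagonal_mul [CommRing R] (w : ι → R) (M : Matrix ι ι R) (T : Finset ι) :
    ((diagonal w * M).submatrix (Subtype.val : T → ι) Subtype.val).det
      = (∏ i ∈ T, w i) * (M.submatrix (Subtype.val : T → ι) Subtype.val).det := by
  have : (diagonal w * M).submatrix (Subtype.val : T → ι) Subtype.val
      = diagonal (fun i : T => w i) * M.submatrix Subtype.val Subtype.val := by
    ext; simp [diagonal_mul]
  rw [this, det_mul, det_diagonal, prod_coe_sort T w]

/-- `Im (v⋆ B diag(w) Bᴴ v) = ∑ |(Bᴴ v)ᵢ|² Im wᵢ` vanishes only when `Bᴴ v = 0`. -/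
theorem det_mul_diagonal_mul_conjTranspose_ne_zero (B : Matrix κ ι ℂ) (hB : (B * Bᴴ).det ≠ 0)
    {w : ι → ℂ} (hw : ∀ i, (w i).im < 0) :
    (B * diagonal w * Bᴴ).det ≠ 0 := by
  intro hdet
  obtain ⟨v, hv, hMv⟩ := exists_mulVec_eq_zero_iff.mpr hdet
  set c := Bᴴ *ᵥ v
  have hquad : ∑ i, Complex.normSq (c i) * w i = 0 := calc
    _ = star c ⬝ᵥ (diagonal w *ᵥ c) := by
      simp only [dotProduct, mulVec_diagonal, Pi.star_apply, Complex.normSq_eq_conj_mul_self]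
      exact sum_congr rfl fun i _ => by rw [Complex.star_def]; ring
    _ = star v ⬝ᵥ (B * diagonal w * Bᴴ) *ᵥ v := by
      rw [star_mulVec, conjTranspose_conjTranspose, ← dotProduct_mulVec, mulVec_mulVec,
        mulVec_mulVec]
    _ = 0 := by rw [hMv, dotProduct_zero]
  have hc : c = 0 := by
    have him := congrArg Complex.im hquad
    simp only [Complex.im_sum, Complex.im_ofReal_mul, Complex.zero_im] at him
    funext i
    have := (sum_eq_zero_iff_of_nonpos fun j _ =>
      mul_nonpos_of_nonneg_of_nonpos (Complex.normSq_nonneg (c j)) (hw j).le).mp him i (mem_univ i)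
    simpa [(hw i).ne] using this
  exact hv (eq_zero_of_mulVec_eq_zero hB <| by
    rw [← mulVec_mulVec, show Bᴴ *ᵥ v = 0 from hc, mulVec_zero])

theorem sum_det_submatrix_transpose_mul_self_mul_prod_compl (A : Matrix κ ι ℝ) {d : ι → ℂ}
    (hd : ∀ i, d i ≠ 0) :
    ∑ T ∈ univ.powersetCard (Fintype.card κ),
        (((Aᵀ * A).submatrix (Subtype.val : T → ι) Subtype.val).det : ℂ) * ∏ i ∈ Tᶜ, d i
      = (∏ i, d i) * (A.map Complex.ofRealHom * diagonal (fun i => (d i)⁻¹) *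
          (A.map Complex.ofRealHom)ᴴ).det := by
  rw [Matrix.mul_assoc, det_mul_eq_sum_principal_minors_mul_comm, mul_sum]
  refine sum_congr rfl fun T _ => ?_
  have hminor : (((Aᵀ * A).submatrix (Subtype.val : T → ι) Subtype.val).det : ℂ)
      = (((A.map Complex.ofRealHom)ᴴ * A.map Complex.ofRealHom).submatrix
          (Subtype.val : T → ι) Subtype.val).det := by
    rw [conjTranspose_map_ofReal, ← Matrix.map_mul, submatrix_map, ← RingHom.mapMatrix_apply,
      ← RingHom.map_det, Complex.ofRealHom_eq_coe]
  have hprod : ∏ i ∈ Tᶜ, d i = (∏ i, d i) * ∏ i ∈ T, (d i)⁻¹ := by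
    rw [← prod_compl_mul_prod T, prod_inv_distrib, mul_assoc,
      mul_inv_cancel₀ (prod_ne_zero_iff.mpr fun i _ => hd i), mul_one]
  rw [Matrix.mul_assoc, det_submatrix_diagonal_mul, hminor, hprod]
  ring

end Matrix

namespace Complex

theorem ne_zero_of_im_pos {z : ℂ} (hz : 0 < z.im) : z ≠ 0 :=
  fun h => by simp [h] at hz

theorem im_inv_neg_of_im_pos {z : ℂ} (hz : 0 < z.im) : z⁻¹.im < 0 := by
  rw [inv_im, neg_div]
  exact neg_neg_of_pos (div_pos hz (normSq_pos.mpr (ne_zero_of_im_pos hz)))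

end Complex

theorem dvs_intermediate_polynomial_real_stable_general {n m : ℕ} (A : Matrix (Fin n) (Fin m) ℝ)
    (hA : A.rank = n)
    (z : Fin m → ℂ) (y : ℂ) (hz : ∀ i, 0 < (z i).im) (hy : 0 < y.im) :
    ∑ S ∈ Finset.univ.filter (fun S : Finset (Fin m) => n ≤ S.card),
        ((∑ T ∈ S.powersetCard n,
            ((Aᵀ * A).submatrix (fun p : {x // x ∈ T} => p.1)
              (fun p : {x // x ∈ T} => p.1)).det : ℝ) : ℂ)
          * y ^ (S.card - n) * ∏ i ∈ Sᶜ, z i ≠ 0 := by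
  have hyz (i : Fin m) : 0 < (y + z i).im := by rw [Complex.add_im]; exact add_pos hy (hz i)
  have hyz_ne (i : Fin m) : y + z i ≠ 0 := Complex.ne_zero_of_im_pos (hyz i)
  have hCauchyBinet := sum_det_submatrix_transpose_mul_self_mul_prod_compl A hyz_ne
  rw [Fintype.card_fin] at hCauchyBinet
  push_cast
  rw [sum_sum_powersetCard_mul_pow_mul_prod_compl, hCauchyBinet]
  exact mul_ne_zero (prod_ne_zero_iff.mpr fun i _ => hyz_ne i)
    (det_mul_diagonal_mul_conjTranspose_ne_zero _
      (det_map_ofReal_mul_conjTranspose_ne_zero A (by rwa [Fintype.card_fin]))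
      fun i => Complex.im_inv_neg_of_im_pos (hyz i))

/-- For a full-row-rank real `n × m` matrix `A` (`n ≤ m`) with `L = Aᵀ A`, the polynomial
`g(z, y) = ∑_{S ⊆ {1,…,m}, |S| ≥ n} e_n(L_{S,S}) y^{|S| - n} ∏_{i ∉ S} z_i`
is real stable: it does not vanish whenever `Im(y) > 0` and `Im(z_i) > 0` for all `i`.
Here `e_n(L_{S,S}) = ∑_{T ⊆ S, |T| = n} det(L_{T,T})`. -/
theorem dvs_intermediate_polynomial_real_stable {n m : ℕ} (A : Matrix (Fin n) (Fin m) ℝ)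
    (hA : A.rank = n) (hnm : n ≤ m)
    (z : Fin m → ℂ) (y : ℂ) (hz : ∀ i, 0 < (z i).im) (hy : 0 < y.im) :
    ∑ S ∈ Finset.univ.filter (fun S : Finset (Fin m) => n ≤ S.card),
        ((∑ T ∈ S.powersetCard n,
            ((Aᵀ * A).submatrix (fun p : {x // x ∈ T} => p.1)
              (fun p : {x // x ∈ T} => p.1)).det : ℝ) : ℂ)
          * y ^ (S.card - n) * ∏ i ∈ Sᶜ, z i ≠ 0 :=
  dvs_intermediate_polynomial_real_stable_general A hA z y hz hy
end

section
/- Let A be a real n×m matrix such that for every S ⊆ {1,…,m} with |S| ≥ n the submatrix A_S has full row rank n, and let k be an integer with n ≤ k ≤ m. Then ∑_{S ⊆ {1,…,m}, |S| = k} det(A_S A_Sᵀ) · tr((A_S A_Sᵀ)^{-1}) ≤ ((m−n+1)/(k−n+1)) · C(m−n, k−n) · det(A Aᵀ) · tr((A Aᵀ)^{-1}). Equivalently, if S is sampled by dual volume sampling, i.e., with probability proportional to det(A_S A_Sᵀ), then E[‖A_S^†‖_F²] ≤ ((m−n+1)/(k−n+1)) ‖A^†‖_F². -/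
open Matrix BigOperators

/-!
Write `G_S = A_S A_Sᵀ`. Since `det G · G⁻¹ = adj G`, the summand `det G_S · tr G_S⁻¹` is
`tr (adj G_S)`, the sum of the principal `(n-1)`-minors of `G_S`. Each such minor is the Gram
determinant of `A` with one row deleted, so Cauchy–Binet gives
`tr (adj G_S) = ∑_{T ⊆ S, |T| = n-1} tr (adj G_T)`. Summing over `|S| = k` counts every
`(n-1)`-set `T` exactly `C(m-n+1, k-n+1)` times, and by the same expansion for `S = [m]` the sum
equals `C(m-n+1, k-n+1) · tr (adj (A Aᵀ))`. The bound therefore holds with equality, because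
`C(m-n+1, k-n+1) = (m-n+1)/(k-n+1) · C(m-n, k-n)`.
-/

open Finset

theorem Nat.cast_sub_add_one_div_mul_choose {K : Type*} [Field K] [CharZero K] {n k m : ℕ}
    (hnk : n ≤ k) (hkm : k ≤ m) :
    ((m : K) - n + 1) / ((k : K) - n + 1) * (m - n).choose (k - n)
      = (m - n + 1).choose (k - n + 1) := by
  rw [← Nat.cast_sub (hnk.trans hkm), ← Nat.cast_sub hnk, div_mul_eq_mul_div,
    div_eq_iff (Nat.cast_add_one_ne_zero (k - n))]
  exact_mod_cast Nat.add_one_mul_choose_eq (m - n) (k - n)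

theorem Finset.sum_powersetCard_sum_powersetCard {α M : Type*} [Fintype α] [DecidableEq α]
    [AddCommMonoid M] (f : Finset α → M) {r k : ℕ} (hrk : r ≤ k) :
    ∑ S ∈ univ.powersetCard k, ∑ T ∈ S.powersetCard r, f T
      = (Fintype.card α - r).choose (k - r) • ∑ T ∈ univ.powersetCard r, f T := by
  rw [sum_comm' (t' := univ.powersetCard r) (s' := fun T => {S ∈ univ.powersetCard k | T ⊆ S})
    (fun S T => by simp only [mem_powersetCard, mem_filter, subset_univ, true_and]; tauto),
    smul_sum]
  refine sum_congr rfl fun T hT => ?_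
  rw [mem_powersetCard_univ] at hT
  rw [sum_const, card_filter_powersetCard_subset T univ k (subset_univ T) (hT ▸ hrk),
    card_univ, hT]

namespace Matrix

section Field

variable {K ι : Type*} [Field K] [Fintype ι] [DecidableEq ι]

theorem det_mul_trace_inv {M : Matrix ι ι K} (h : M.det ≠ 0) :
    M.det * M⁻¹.trace = M.adjugate.trace := by
  rw [inv_def, trace_smul, Ring.inverse_eq_inv, smul_eq_mul, ← mul_assoc, mul_inv_cancel₀ h,
    one_mul]

theorem det_ne_zero_of_rank_eq_card {M : Matrix ι ι K} (h : M.rank = Fintype.card ι) :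
    M.det ≠ 0 := by
  have hrange : LinearMap.range M.mulVecLin = ⊤ :=
    Submodule.eq_top_of_finrank_eq (by rw [← rank, h, Module.finrank_fintype_fun_eq_card])
  exact ((isUnit_iff_isUnit_det M).mp
    (mulVec_surjective_iff_isUnit.mp (LinearMap.range_eq_top.mp hrange))).ne_zero

end Field

section CommRing

variable {R ι : Type*} [CommRing R] {r : ℕ}

theorem trace_adjugate_fin_succ (M : Matrix (Fin (r + 1)) (Fin (r + 1)) R) :
    M.adjugate.trace = ∑ i : Fin (r + 1), (M.submatrix i.succAbove i.succAbove).det := by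
  simp [trace, adjugate_fin_succ_eq_det_submatrix, ← two_mul, pow_mul]

theorem det_sum_vecMulVec_eq_sum_piFinset (u v : ι → Fin r → R) (S : Finset ι) :
    (∑ t ∈ S, vecMulVec (u t) (v t)).det
      = ∑ p ∈ Fintype.piFinset fun _ => S, (∏ a, u (p a) a) * (of fun a => v (p a)).det := by
  have hrows : ∑ t ∈ S, vecMulVec (u t) (v t) = of fun a => ∑ t ∈ S, u t a • v t := by
    ext a b
    simp [Matrix.sum_apply, vecMulVec_apply]
  rw [hrows]
  exact ((detRowAlternating (R := R) (n := Fin r)).map_sum_finset _ _).trans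
    (sum_congr rfl fun p _ => detRowAlternating.map_smul_univ _ _)

/-- The Cauchy–Binet formula, for a sum of rank-one matrices. -/
theorem det_sum_vecMulVec_eq_sum_powersetCard [DecidableEq ι] (u v : ι → Fin r → R)
    (S : Finset ι) :
    (∑ t ∈ S, vecMulVec (u t) (v t)).det
      = ∑ T ∈ S.powersetCard r, (∑ t ∈ T, vecMulVec (u t) (v t)).det := by
  set term : (Fin r → ι) → R := fun p => (∏ a, u (p a) a) * (of fun a => v (p a)).det
  have expand (T : Finset ι) : (∑ t ∈ T, vecMulVec (u t) (v t)).det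
      = ∑ p ∈ Fintype.piFinset (fun _ => T) with p.Injective, term p := by
    rw [det_sum_vecMulVec_eq_sum_piFinset, sum_filter_of_ne]
    intro p _ hp
    by_contra hinj
    obtain ⟨a, b, hab, hne⟩ := Function.not_injective_iff.mp hinj
    exact hp <| mul_eq_zero_of_right _ <|
      det_zero_of_row_eq (M := of fun a => v (p a)) hne (congrArg v hab)
  have image_mem : ∀ p ∈ {p ∈ Fintype.piFinset (fun _ : Fin r => S) | p.Injective},
      univ.image p ∈ S.powersetCard r := by
    intro p hp
    simp only [mem_filter, Fintype.mem_piFinset] at hp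
    rw [mem_powersetCard, card_image_of_injective _ hp.2, card_univ, Fintype.card_fin]
    exact ⟨image_subset_iff.mpr fun a _ => hp.1 a, rfl⟩
  rw [expand, ← sum_fiberwise_of_maps_to image_mem]
  refine sum_congr rfl fun T hT => ?_
  rw [expand, filter_filter]
  refine sum_congr (Finset.ext fun p => ?_) fun _ _ => rfl
  rw [mem_powersetCard] at hT
  simp only [mem_filter, Fintype.mem_piFinset]
  constructor
  · rintro ⟨-, hinj, rfl⟩
    exact ⟨fun a => mem_image_of_mem p (mem_univ a), hinj⟩
  · rintro ⟨hpT, hinj⟩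
    refine ⟨fun a => hT.1 (hpT a), hinj, eq_of_subset_of_card_le ?_ ?_⟩
    · exact image_subset_iff.mpr fun a _ => hpT a
    · rw [card_image_of_injective _ hinj, card_univ, Fintype.card_fin, hT.2]

end CommRing

end Matrix

section DualVolumeSampling

variable {n m : ℕ}

theorem dvsGram_eq_sum_vecMulVec (A : Matrix (Fin n) (Fin m) ℝ) (S : Finset (Fin m)) :
    dvsGram A S = ∑ t ∈ S, vecMulVec (Aᵀ t) (Aᵀ t) := by
  ext i j
  simp [dvsGram, Matrix.sum_apply, vecMulVec_apply]

theorem dvsGram_eq_mul_transpose (A : Matrix (Fin n) (Fin m) ℝ) (S : Finset (Fin m)) :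
    dvsGram A S = dvsCols A S * (dvsCols A S)ᵀ := by
  ext i j
  simp only [dvsGram, dvsCols, mul_apply, of_apply, transpose_apply, submatrix_apply, id]
  exact (sum_coe_sort S fun t => A i t * A j t).symm

theorem dvsGram_univ (A : Matrix (Fin n) (Fin m) ℝ) : dvsGram A univ = A * Aᵀ := by
  ext i j
  simp [dvsGram, mul_apply]

theorem dvsGram_submatrix {r : ℕ} (A : Matrix (Fin n) (Fin m) ℝ) (f : Fin r → Fin n)
    (S : Finset (Fin m)) : (dvsGram A S).submatrix f f = dvsGram (A.submatrix f id) S :=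
  rfl

theorem det_dvsGram_ne_zero {A : Matrix (Fin n) (Fin m) ℝ} {S : Finset (Fin m)}
    (h : (dvsCols A S).rank = n) : (dvsGram A S).det ≠ 0 :=
  det_ne_zero_of_rank_eq_card <| by
    rw [dvsGram_eq_mul_transpose, rank_self_mul_transpose, h, Fintype.card_fin]

theorem det_dvsGram_eq_sum_powersetCard (A : Matrix (Fin n) (Fin m) ℝ) (S : Finset (Fin m)) :
    (dvsGram A S).det = ∑ T ∈ S.powersetCard n, (dvsGram A T).det := by
  simp only [dvsGram_eq_sum_vecMulVec]
  exact det_sum_vecMulVec_eq_sum_powersetCard _ _ S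

theorem trace_adjugate_dvsGram_eq_sum_powersetCard {r : ℕ}
    (A : Matrix (Fin (r + 1)) (Fin m) ℝ) (S : Finset (Fin m)) :
    (dvsGram A S).adjugate.trace = ∑ T ∈ S.powersetCard r, (dvsGram A T).adjugate.trace := by
  simp only [trace_adjugate_fin_succ, dvsGram_submatrix, det_dvsGram_eq_sum_powersetCard _ S]
  exact sum_comm

end DualVolumeSampling

/-- **Frobenius-norm bound for dual volume sampling (A-optimality).**
If every `n`-or-more column submatrix of `A` has full row rank `n` and `n ≤ k ≤ m`, then
`∑_{|S| = k} det(A_S A_Sᵀ) tr((A_S A_Sᵀ)⁻¹)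
   ≤ ((m-n+1)/(k-n+1)) C(m-n, k-n) det(A Aᵀ) tr((A Aᵀ)⁻¹)`;
equivalently, for `S` drawn by dual volume sampling,
`𝔼[‖A_S^†‖_F²] ≤ ((m-n+1)/(k-n+1)) ‖A^†‖_F²`. -/
theorem dvs_expected_frobenius_bound {n m : ℕ} (A : Matrix (Fin n) (Fin m) ℝ)
    (hrank : ∀ S : Finset (Fin m), n ≤ S.card → (dvsCols A S).rank = n)
    (k : ℕ) (hnk : n ≤ k) (hkm : k ≤ m) :
    ∑ S ∈ Finset.univ.powersetCard k, (dvsGram A S).det * ((dvsGram A S)⁻¹).trace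
      ≤ (((m : ℝ) - n + 1) / ((k : ℝ) - n + 1)) * ((m - n).choose (k - n) : ℝ)
          * (A * Aᵀ).det * ((A * Aᵀ)⁻¹).trace := by
  obtain _ | r := n
  · simp [trace]
  have hdet (S : Finset (Fin m)) (hS : r + 1 ≤ #S) : (dvsGram A S).det ≠ 0 :=
    det_dvsGram_ne_zero (hrank S hS)
  have lhs_eq : ∑ S ∈ univ.powersetCard k, (dvsGram A S).det * ((dvsGram A S)⁻¹).trace
      = ∑ S ∈ univ.powersetCard k, (dvsGram A S).adjugate.trace :=
    sum_congr rfl fun S hS => det_mul_trace_inv (hdet S ((mem_powersetCard_univ.mp hS) ▸ hnk))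
  have rhs_eq : (A * Aᵀ).det * ((A * Aᵀ)⁻¹).trace = (dvsGram A univ).adjugate.trace := by
    rw [← dvsGram_univ]
    exact det_mul_trace_inv (hdet univ (by simpa using hnk.trans hkm))
  refine le_of_eq ?_
  calc _ = ∑ S ∈ univ.powersetCard k, ∑ T ∈ S.powersetCard r,
          (dvsGram A T).adjugate.trace := by
        rw [lhs_eq]
        exact sum_congr rfl fun S _ => trace_adjugate_dvsGram_eq_sum_powersetCard A S
    _ = (m - r).choose (k - r) * (dvsGram A univ).adjugate.trace := by
        rw [sum_powersetCard_sum_powersetCard _ (by omega), Fintype.card_fin, nsmul_eq_mul,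
          ← trace_adjugate_dvsGram_eq_sum_powersetCard]
    _ = _ := by
        rw [mul_assoc _ (A * Aᵀ).det, rhs_eq, Nat.cast_sub_add_one_div_mul_choose hnk hkm,
          show m - (r + 1) + 1 = m - r by omega, show k - (r + 1) + 1 = k - r by omega]
end

section
/- Let f be a real stable polynomial in the complex variables z_1,…,z_m and let μ ∈ ℝ. Then the polynomial g(z_2,…,z_m) = f(μ, z_2,…,z_m), obtained by substituting the real value μ for z_1, is either identically zero or real stable in the variables z_2,…,z_m. -/
/-!
A Hurwitz-type argument along a complex line. Suppose `g = f(μ, ·)` vanishes at a point `w` with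
all `Im wᵢ > 0` but not at some `w₀`, and restrict `f(μ + s, ·)` to the line `t ↦ w + t (w₀ - w)`.
For `Im s > 0`, stability keeps every root of this one-variable polynomial outside a disk
`‖t‖ < ε` independent of `s` (on it the line stays in the upper half-plane product), so on the disk
of radius `ε / 2` the polynomial is bounded by `(3/2)^deg` times its value at `t = 0`.
Letting `s → 0` gives the same bound for `g`, whose value at `t = 0` is `g(w) = 0`. Hence `g`
vanishes on a disk of the line, so on the whole line, and in particular at `w₀`.
-/

open MvPolynomial Polynomial

theorem Polynomial.Splits.norm_eval_le_pow_mul_norm_eval_zero {K : Type*} [NormedField K] {p : K[X]}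
    (hp : p.Splits) {t : K} (ht : ∀ r ∈ p.roots, 2 * ‖t‖ ≤ ‖r‖) :
    ‖p.eval t‖ ≤ (3 / 2) ^ p.natDegree * ‖p.eval 0‖ := by
  have hnorm (s : Multiset K) : ‖s.prod‖ = (s.map (‖·‖)).prod :=
    map_multiset_prod (normHom (α := K)) s
  have hfactor : ∀ r ∈ p.roots, ‖t - r‖ ≤ 3 / 2 * ‖0 - r‖ := fun r hr => by
    rw [zero_sub, norm_neg]
    linarith [norm_sub_le t r, ht r hr]
  rw [hp.eval_eq_prod_roots, hp.eval_eq_prod_roots, norm_mul, norm_mul, hnorm, hnorm,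
    Multiset.map_map, Multiset.map_map, mul_left_comm]
  gcongr
  calc _ ≤ (p.roots.map fun r => 3 / 2 * ‖0 - r‖).prod :=
        Multiset.prod_map_le_prod_map₀ _ _ (fun _ _ => norm_nonneg _) hfactor
    _ = _ := by
        rw [Multiset.prod_map_mul, Multiset.map_const', Multiset.prod_replicate,
          hp.natDegree_eq_card_roots]
        rfl

noncomputable def MvPolynomial.restrictLine {σ R A : Type*} [CommSemiring R] [CommSemiring A]
    [Algebra R A] (a b : σ → A) (q : MvPolynomial σ R) : A[X] :=
  aeval (fun i => Polynomial.C (b i) * Polynomial.X + Polynomial.C (a i)) q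

theorem MvPolynomial.eval_restrictLine {σ R A : Type*} [CommSemiring R] [CommSemiring A]
    [Algebra R A] (a b : σ → A) (q : MvPolynomial σ R) (t : A) :
    (q.restrictLine a b).eval t = aeval (a + t • b) q := by
  rw [restrictLine, ← Polynomial.coe_aeval_eq_eval, ← AlgHom.restrictScalars_apply R,
    comp_aeval_apply]
  congr 2
  funext i
  simp only [AlgHom.coe_restrictScalars', Polynomial.coe_aeval_eq_eval, Polynomial.eval_add,
    Polynomial.eval_mul, Polynomial.eval_C, Polynomial.eval_X, Pi.add_apply, Pi.smul_apply,
    smul_eq_mul]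
  ring

theorem MvPolynomial.natDegree_restrictLine_le {σ R A : Type*} [CommSemiring R] [CommSemiring A]
    [Algebra R A] (a b : σ → A) (q : MvPolynomial σ R) :
    (q.restrictLine a b).natDegree ≤ q.totalDegree := by
  rw [restrictLine, aeval_def, eval₂_eq]
  refine Polynomial.natDegree_sum_le_of_forall_le _ _ fun d hd => ?_
  calc _ ≤ ∑ i ∈ d.support, d i * 1 :=
        (natDegree_C_mul_le _ _).trans <| (natDegree_prod_le _ _).trans <|
          Finset.sum_le_sum fun i _ => natDegree_pow_le_of_le _ natDegree_linear_le
    _ ≤ q.totalDegree := by simpa [Finsupp.sum] using le_totalDegree hd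

@[fun_prop]
theorem MvPolynomial.continuous_aeval {σ R A : Type*} [CommSemiring R] [CommSemiring A]
    [Algebra R A] [TopologicalSpace A] [IsTopologicalSemiring A] (q : MvPolynomial σ R) :
    Continuous fun x : σ → A => aeval x q := by
  simpa only [aeval_def, eval₂_eq_eval_map] using continuous_eval (q.map (algebraMap R A))

theorem MvPolynomial.norm_aeval_add_smul_le {σ R K : Type*} [CommSemiring R] [NormedField K]
    [IsAlgClosed K] [Algebra R K] {q : MvPolynomial σ R} {a b : σ → K} {ε : ℝ}
    (hq : ∀ t : K, ‖t‖ < ε → aeval (a + t • b) q ≠ 0) {t : K} (ht : 2 * ‖t‖ ≤ ε) :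
    ‖aeval (a + t • b) q‖ ≤ (3 / 2) ^ q.totalDegree * ‖aeval a q‖ := by
  set p := q.restrictLine a b
  have hroots : ∀ r ∈ p.roots, 2 * ‖t‖ ≤ ‖r‖ := fun r hr => by
    by_contra! hr'
    exact hq r (by linarith) (by rw [← eval_restrictLine]; exact (mem_roots'.1 hr).2)
  calc ‖aeval (a + t • b) q‖ = ‖p.eval t‖ := by rw [eval_restrictLine]
    _ ≤ (3 / 2) ^ p.natDegree * ‖p.eval 0‖ :=
        (IsAlgClosed.splits p).norm_eval_le_pow_mul_norm_eval_zero hroots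
    _ ≤ (3 / 2) ^ q.totalDegree * ‖p.eval 0‖ := by
        gcongr
        · norm_num
        · exact natDegree_restrictLine_le a b q
    _ = (3 / 2) ^ q.totalDegree * ‖aeval a q‖ := by rw [eval_restrictLine, zero_smul, add_zero]

theorem Fin.cons_add_smul_cons_zero {n : ℕ} {R M : Type*} [Semiring R] [AddCommMonoid M]
    [Module R M] (x : M) (v w : Fin n → M) (t : R) :
    (Fin.cons x v : Fin (n + 1) → M) + t • (Fin.cons 0 w : Fin (n + 1) → M) =
      (Fin.cons x (v + t • w) : Fin (n + 1) → M) := by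
  ext i
  refine Fin.cases ?_ (fun j => ?_) i <;> simp

theorem exists_norm_aeval_cons_add_smul_le {m : ℕ} {f : MvPolynomial (Fin (m + 1)) ℝ}
    (hf : ∀ z : Fin (m + 1) → ℂ, (∀ i, 0 < (z i).im) → aeval z f ≠ 0) (μ : ℝ)
    {w : Fin m → ℂ} (hw : ∀ i, 0 < (w i).im) (v : Fin m → ℂ) :
    ∃ ε > 0, ∀ t : ℂ, 2 * ‖t‖ ≤ ε → ‖aeval (Fin.cons (μ : ℂ) (w + t • v)) f‖ ≤
      (3 / 2) ^ f.totalDegree * ‖aeval (Fin.cons (μ : ℂ) w) f‖ := by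
  have hopen : IsOpen {t : ℂ | ∀ i, 0 < (w i + t * v i).im} := by
    simp only [Set.ofPred_forall]
    exact isOpen_iInter_of_finite fun i => isOpen_lt continuous_const (by fun_prop)
  obtain ⟨ε, hε, hball⟩ := Metric.isOpen_iff.1 hopen 0 (by simpa using hw)
  refine ⟨ε, hε, fun t ht => ?_⟩
  have hupper : {s : ℂ | 0 < s.im} ⊆ {s : ℂ | ‖aeval (Fin.cons (μ + s) (w + t • v)) f‖ ≤
      (3 / 2) ^ f.totalDegree * ‖aeval (Fin.cons (μ + s) w) f‖} := fun s hs => by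
    have hstable : ∀ r : ℂ, ‖r‖ < ε → aeval (Fin.cons (μ + s) w + r • Fin.cons 0 v) f ≠ 0 := by
      intro r hr
      rw [Fin.cons_add_smul_cons_zero]
      refine hf _ fun i => Fin.cases ?_ (fun j => ?_) i
      · simpa using hs
      · simpa using hball (mem_ball_zero_iff.2 hr) j
    simpa only [Set.mem_ofPred_eq, Fin.cons_add_smul_cons_zero] using
      norm_aeval_add_smul_le hstable ht
  have hclosed : IsClosed {s : ℂ | ‖aeval (Fin.cons (μ + s) (w + t • v)) f‖ ≤
      (3 / 2) ^ f.totalDegree * ‖aeval (Fin.cons (μ + s) w) f‖} :=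
    isClosed_le (by fun_prop) (by fun_prop)
  have hzero : (0 : ℂ) ∈ closure {s : ℂ | 0 < s.im} := by simp
  simpa using hclosed.closure_subset_iff.2 hupper hzero

/-- **Substitution preserves real stability.**  Let `f` be a real stable polynomial in
`z_1, …, z_{m+1}` (real coefficients, nonvanishing when all variables have positive
imaginary part) and let `μ ∈ ℝ`.  Then `g(z_2, …, z_{m+1}) = f(μ, z_2, …, z_{m+1})`
is either identically zero or real stable. -/
theorem real_stable_substitution {m : ℕ} (f : MvPolynomial (Fin (m + 1)) ℝ)
    (hf : ∀ z : Fin (m + 1) → ℂ, (∀ i, 0 < (z i).im) → MvPolynomial.aeval z f ≠ 0)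
    (μ : ℝ) :
    (∀ w : Fin m → ℂ, MvPolynomial.aeval (Fin.cons (μ : ℂ) w) f = 0) ∨
    (∀ w : Fin m → ℂ, (∀ i, 0 < (w i).im) →
        MvPolynomial.aeval (Fin.cons (μ : ℂ) w) f ≠ 0) := by
  refine or_iff_not_imp_right.2 fun hnot w₀ => ?_
  push Not at hnot
  obtain ⟨w, hw, hzero⟩ := hnot
  obtain ⟨ε, hε, hle⟩ := exists_norm_aeval_cons_add_smul_le hf μ hw (w₀ - w)
  set p := f.restrictLine (Fin.cons (μ : ℂ) w) (Fin.cons 0 (w₀ - w))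
  have hp (t : ℂ) : p.eval t = aeval (Fin.cons (μ : ℂ) (w + t • (w₀ - w))) f := by
    rw [eval_restrictLine, Fin.cons_add_smul_cons_zero]
  have hroots : ∀ᶠ t in nhds (0 : ℂ), p.IsRoot t := by
    filter_upwards [Metric.closedBall_mem_nhds 0 (half_pos hε)] with t ht
    rw [mem_closedBall_zero_iff] at ht
    have hsmall := hle t (by linarith)
    rw [hzero, norm_zero, mul_zero, norm_le_zero_iff] at hsmall
    rwa [IsRoot, hp]
  have hp0 : p = 0 := eq_zero_of_infinite_isRoot p (infinite_of_mem_nhds 0 hroots)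
  simpa [hp] using congrArg (eval 1) hp0
end

section
/- Let f be a real stable polynomial in the complex variables z_1,…,z_m. Then the partial derivative ∂f/∂z_1 is either identically zero or real stable in z_1,…,z_m. -/
/-!
Write `f = ∑ₖ cₖ(z₂, …, zₘ) z₁ᵏ` with leading coefficient `c = c_d`; if `d = 0` then
`∂f/∂z₁ = 0`. Fix `w ∈ H^{m-1}`, where `H` is the open upper half-plane. The slice `t ↦ f(t, w)`
has no zeros in `H`, so by Gauss–Lucas neither has its derivative `t ↦ ∂f/∂z₁(t, w)`, provided
the slice is not constant, e.g. if `c(w) ≠ 0`. So everything reduces to showing that `c` has no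
zeros on `H^{m-1}`.

That is a Hurwitz-type argument. If `c(w) = 0`, pick `y` with `c(y) ≠ 0` and let `φ(s)` run
along the complex line from `w = φ(0)` to `y = φ(1)`; for `|s| ≤ ρ` it stays in `H^{m-1}`. For
`n ≥ 1` the polynomials `s ↦ f(n i, φ(s)) / (n i)^d` have bounded degree, have no zeros on the
disc `|s| ≤ ρ`, and tend to `c(φ(s))`. A polynomial of degree `≤ D` without zeros on that disc
satisfies `|p(s)| ≤ 2^D |p(0)|` there (compare `|s - r|` with `|r|` root by root), and in the
limit `|c(φ(s))| ≤ 2^D |c(w)| = 0`. So `c ∘ φ` vanishes on the disc, hence everywhere,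
contradicting `c(φ(1)) ≠ 0`.
-/

open Filter Topology Metric Bornology Polynomial

namespace Polynomial

theorem eval_derivative_ne_zero_of_forall_im_pos {P : ℂ[X]} (hP : 0 < P.degree)
    (hP_stable : ∀ z : ℂ, 0 < z.im → P.eval z ≠ 0) {x : ℂ} (hx : 0 < x.im) :
    P.derivative.eval x ≠ 0 := by
  intro hPx
  have hroots : P.rootSet ℂ ⊆ {z : ℂ | z.im ≤ 0} := fun z hz ↦ by
    rw [mem_rootSet, coe_aeval_eq_eval] at hz
    exact not_lt.1 fun h ↦ hP_stable z h hz.2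
  have hx_root : x ∈ P.derivative.rootSet ℂ := by
    rw [mem_rootSet, coe_aeval_eq_eval]
    exact ⟨derivative_ne_zero.2 (natDegree_pos_iff_degree_pos.2 hP).ne', hPx⟩
  have := convexHull_min hroots (convex_halfSpace_le Complex.imLm.isLinear 0)
    (rootSet_derivative_subset_convexHull_rootSet hP hx_root)
  exact this.not_gt hx

theorem norm_eval_le_two_pow_mul_norm_eval_zero {p : ℂ[X]} {ρ : ℝ}
    (hp : ∀ s ∈ closedBall (0 : ℂ) ρ, p.eval s ≠ 0) {s : ℂ} (hs : s ∈ closedBall 0 ρ) :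
    ‖p.eval s‖ ≤ 2 ^ p.natDegree * ‖p.eval 0‖ := by
  have hsplit := IsAlgClosed.splits p
  have hroots : ∀ r ∈ p.roots, ‖s - r‖ ≤ 2 * ‖r‖ := fun r hr ↦ by
    have hρr : ρ < ‖r‖ := not_le.1 fun h ↦ hp r (by simpa using h) (isRoot_of_mem_roots hr)
    have : ‖s‖ ≤ ρ := by simpa using hs
    linarith [norm_sub_le s r]
  have norm_prod (m : Multiset ℂ) : ‖m.prod‖ = (m.map (‖·‖)).prod := map_multiset_prod normHom m
  calc ‖p.eval s‖ = ‖p.leadingCoeff‖ * (p.roots.map fun r ↦ ‖s - r‖).prod := by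
        simp [hsplit.eval_eq_prod_roots, norm_prod]
    _ ≤ ‖p.leadingCoeff‖ * (p.roots.map fun r ↦ 2 * ‖r‖).prod := by
        gcongr
        exact Multiset.prod_map_le_prod_map₀ _ _ (fun _ _ ↦ norm_nonneg _) hroots
    _ = 2 ^ p.roots.card * ‖p.eval 0‖ := by
        simp [hsplit.eval_eq_prod_roots, Multiset.prod_map_mul, norm_prod]
        ring
    _ ≤ 2 ^ p.natDegree * ‖p.eval 0‖ := by
        gcongr
        · exact one_le_two
        · exact card_roots' p

theorem eqOn_zero_of_tendsto_eval {ι : Type*} {l : Filter ι} [l.NeBot] {q : ι → ℂ[X]} {D : ℕ}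
    {ρ : ℝ} {g : ℂ → ℂ} (hdeg : ∀ i, (q i).natDegree ≤ D)
    (hq : ∀ᶠ i in l, ∀ s ∈ closedBall (0 : ℂ) ρ, (q i).eval s ≠ 0)
    (hlim : ∀ s ∈ closedBall (0 : ℂ) ρ, Tendsto (fun i ↦ (q i).eval s) l (𝓝 (g s)))
    (hg : g 0 = 0) : Set.EqOn g 0 (closedBall 0 ρ) := by
  intro s hs
  have h0 : (0 : ℂ) ∈ closedBall 0 ρ := by simpa using nonneg_of_mem_closedBall hs
  have hbound : ∀ᶠ i in l, ‖(q i).eval s‖ ≤ 2 ^ D * ‖(q i).eval 0‖ := hq.mono fun i hi ↦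
    (norm_eval_le_two_pow_mul_norm_eval_zero hi hs).trans <| by
      gcongr
      · exact one_le_two
      · exact hdeg i
  have := le_of_tendsto_of_tendsto (hlim s hs).norm ((hlim 0 h0).norm.const_mul _) hbound
  simpa [hg] using this

theorem tendsto_eval_div_pow_cobounded {𝕜 : Type*} [NormedField 𝕜] {r : 𝕜[X]} {d : ℕ}
    (hd : r.natDegree ≤ d) :
    Tendsto (fun t ↦ r.eval t / t ^ d) (cobounded 𝕜) (𝓝 (r.coeff d)) := by
  have hreflect : ∀ t : 𝕜, t ≠ 0 → r.eval t / t ^ d = (reflect d r).eval t⁻¹ := fun t ht ↦ by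
    let := invertibleOfNonzero ht
    rw [div_eq_iff (pow_ne_zero _ ht), ← invOf_eq_inv, eval, eval, eval₂_reflect_mul_pow _ _ _ _ hd]
  have hlim : Tendsto (fun t : 𝕜 ↦ (reflect d r).eval t⁻¹) (cobounded 𝕜) (𝓝 (r.coeff d)) := by
    have := ((reflect d r).continuous.tendsto 0).comp tendsto_inv₀_cobounded
    rwa [Function.comp_def, ← coeff_zero_eq_eval_zero, coeff_reflect, revAt_zero] at this
  refine hlim.congr' ?_
  filter_upwards [eventually_ne_cobounded 0] with t ht using (hreflect t ht).symm

end Polynomial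

namespace MvPolynomial

theorem exists_aeval_ne_zero {σ R S : Type*} [CommSemiring R] [CommRing S] [IsDomain S]
    [Infinite S] [Algebra R S] [FaithfulSMul R S] {p : MvPolynomial σ R} (hp : p ≠ 0) :
    ∃ x : σ → S, aeval x p ≠ 0 := by
  by_contra! h
  refine hp (map_injective _ (FaithfulSMul.algebraMap_injective R S) (funext fun x ↦ ?_))
  simpa [eval_map, ← aeval_def] using h x

section EvalTail

variable {R S : Type*} [CommSemiring R] [CommSemiring S] [Algebra R S] {m : ℕ}

theorem polynomial_eval_aeval {σ : Type*} (g : σ → S[X]) (p : MvPolynomial σ R) (x : S) :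
    (aeval g p).eval x = aeval (fun i ↦ (g i).eval x) p := by
  induction p using MvPolynomial.induction_on with
  | C a => simp
  | add p q hp hq => simp [hp, hq]
  | mul_X p i ih => simp [ih]

theorem finSuccEquiv_pderiv_zero (f : MvPolynomial (Fin (m + 1)) R) :
    finSuccEquiv R m (pderiv 0 f) = derivative (finSuccEquiv R m f) := by
  induction f using MvPolynomial.induction_on with
  | C a => simp [finSuccEquiv_apply]
  | add p q hp hq => simp [hp, hq]
  | mul_X p i ih =>
    rw [pderiv_mul, map_add, map_mul, map_mul, ih, map_mul, derivative_mul]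
    cases i using Fin.cases with
    | zero => simp [finSuccEquiv_X_zero]
    | succ j => simp [pderiv_X_of_ne (Fin.succ_ne_zero j), finSuccEquiv_X_succ]

noncomputable def evalTail (w : Fin m → S) (f : MvPolynomial (Fin (m + 1)) R) : S[X] :=
  (finSuccEquiv R m f).map (aeval w).toRingHom

theorem eval_evalTail (w : Fin m → S) (f : MvPolynomial (Fin (m + 1)) R) (t : S) :
    (evalTail w f).eval t = aeval (Fin.cons t w) f := by
  induction f using MvPolynomial.induction_on with
  | C a => simp [evalTail, finSuccEquiv_apply]
  | add p q hp hq => simp_all [evalTail]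
  | mul_X p i ih =>
    cases i using Fin.cases <;> simp_all [evalTail, finSuccEquiv_X_zero, finSuccEquiv_X_succ]

theorem evalTail_pderiv_zero (w : Fin m → S) (f : MvPolynomial (Fin (m + 1)) R) :
    evalTail w (pderiv 0 f) = derivative (evalTail w f) := by
  rw [evalTail, finSuccEquiv_pderiv_zero, ← derivative_map, evalTail]

theorem natDegree_evalTail_le (w : Fin m → S) (f : MvPolynomial (Fin (m + 1)) R) :
    (evalTail w f).natDegree ≤ (finSuccEquiv R m f).natDegree :=
  natDegree_map_le

theorem coeff_evalTail (w : Fin m → S) (f : MvPolynomial (Fin (m + 1)) R) (k : ℕ) :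
    (evalTail w f).coeff k = aeval w ((finSuccEquiv R m f).coeff k) :=
  Polynomial.coeff_map _ _

end EvalTail

section Stable

variable {R : Type*} [CommSemiring R] [Algebra R ℂ] {m : ℕ} {f : MvPolynomial (Fin (m + 1)) R}

theorem eval_evalTail_ne_zero
    (hf : ∀ z : Fin (m + 1) → ℂ, (∀ i, 0 < (z i).im) → aeval z f ≠ 0)
    {w : Fin m → ℂ} (hw : ∀ j, 0 < (w j).im) {t : ℂ} (ht : 0 < t.im) :
    (evalTail w f).eval t ≠ 0 := by
  rw [eval_evalTail]
  exact hf _ fun i ↦ Fin.cases ht hw i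

theorem eqOn_zero_of_eval_aeval_leadingCoeff_eq_zero
    (hf : ∀ z : Fin (m + 1) → ℂ, (∀ i, 0 < (z i).im) → aeval z f ≠ 0)
    {L : Fin m → ℂ[X]} {ρ : ℝ} (hL : ∀ s ∈ closedBall (0 : ℂ) ρ, ∀ j, 0 < ((L j).eval s).im)
    (hL_zero : (aeval L (finSuccEquiv R m f).leadingCoeff).eval 0 = 0) :
    Set.EqOn (aeval L (finSuccEquiv R m f).leadingCoeff).eval 0 (closedBall 0 ρ) := by
  set d := (finSuccEquiv R m f).natDegree
  let φ : ℂ → Fin m → ℂ := fun s j ↦ (L j).eval s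
  let Q : ℕ → ℂ[X] := fun n ↦
    .C ((n * Complex.I) ^ d)⁻¹ * aeval (Fin.cons (.C (n * Complex.I)) L) f
  have hQ_deg (n : ℕ) : (Q n).natDegree ≤
      (map (algebraMap R ℂ) f).totalDegree * Finset.univ.sup fun j ↦ (L j).natDegree := by
    refine (natDegree_C_mul_le _ _).trans ?_
    rw [← aeval_map_algebraMap ℂ]
    refine aeval_natDegree_le _ le_rfl _ fun i ↦ ?_
    cases i using Fin.cases with
    | zero => exact (natDegree_C _).trans_le (Nat.zero_le _)
    | succ j => exact Finset.le_sup (f := fun j ↦ (L j).natDegree) (Finset.mem_univ j)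
  have hQ_eval (n : ℕ) (s : ℂ) :
      (Q n).eval s = (evalTail (φ s) f).eval (n * Complex.I) / (n * Complex.I) ^ d := by
    rw [eval_evalTail, ← inv_mul_eq_div, Polynomial.eval_mul, Polynomial.eval_C,
      polynomial_eval_aeval]
    congr 2
    ext i
    cases i using Fin.cases <;> simp [φ]
  have hQ_ne : ∀ᶠ n in atTop, ∀ s ∈ closedBall (0 : ℂ) ρ, (Q n).eval s ≠ 0 := by
    filter_upwards [eventually_gt_atTop 0] with n hn s hs
    rw [hQ_eval]
    exact div_ne_zero (eval_evalTail_ne_zero hf (hL s hs) (by simpa using hn)) (by simp; omega)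
  have hQ_lim (s : ℂ) : Tendsto (fun n ↦ (Q n).eval s) atTop
      (𝓝 ((aeval L (finSuccEquiv R m f).leadingCoeff).eval s)) := by
    have h_nI : Tendsto (fun n : ℕ ↦ (n : ℂ) * Complex.I) atTop (cobounded ℂ) :=
      tendsto_norm_atTop_iff_cobounded.1 (by simpa using tendsto_natCast_atTop_atTop)
    have := (tendsto_eval_div_pow_cobounded (natDegree_evalTail_le (φ s) f)).comp h_nI
    simpa [Function.comp_def, hQ_eval, coeff_evalTail, polynomial_eval_aeval] using this
  exact eqOn_zero_of_tendsto_eval hQ_deg hQ_ne (fun s _ ↦ hQ_lim s) hL_zero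

theorem aeval_leadingCoeff_finSuccEquiv_ne_zero [FaithfulSMul R ℂ]
    (hf : ∀ z : Fin (m + 1) → ℂ, (∀ i, 0 < (z i).im) → aeval z f ≠ 0)
    {w : Fin m → ℂ} (hw : ∀ j, 0 < (w j).im) :
    aeval w (finSuccEquiv R m f).leadingCoeff ≠ 0 := by
  intro hw_zero
  set c := (finSuccEquiv R m f).leadingCoeff
  have hf_ne : f ≠ 0 := by
    rintro rfl
    exact hf (fun _ ↦ Complex.I) (fun _ ↦ by simp) (map_zero _)
  obtain ⟨y, hy⟩ : ∃ y : Fin m → ℂ, aeval y c ≠ 0 :=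
    exists_aeval_ne_zero (leadingCoeff_ne_zero.2 ((finSuccEquiv R m).map_ne_zero_iff.2 hf_ne))
  let L : Fin m → ℂ[X] := fun j ↦ .C (y j - w j) * .X + .C (w j)
  obtain ⟨ρ, hρ, hL⟩ : ∃ ρ > 0, ∀ s ∈ closedBall (0 : ℂ) ρ, ∀ j, 0 < ((L j).eval s).im := by
    refine nhds_basis_closedBall.mem_iff.1 (eventually_all.2 fun j ↦ ?_)
    refine ((Complex.continuous_im.comp (L j).continuous).tendsto 0).eventually (lt_mem_nhds ?_)
    simpa [L] using hw j
  have hq_zero := eqOn_zero_of_eval_aeval_leadingCoeff_eq_zero hf hL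
    (by simpa [polynomial_eval_aeval, L] using hw_zero)
  have hq : aeval L c = 0 := eq_zero_of_infinite_isRoot _
    ((infinite_of_mem_nhds 0 (closedBall_mem_nhds 0 hρ)).mono hq_zero)
  apply hy
  simpa [polynomial_eval_aeval, L] using congr_arg (Polynomial.eval 1) hq

end Stable

end MvPolynomial

open MvPolynomial BigOperators

/-- **Differentiation preserves real stability.**  Let `f` be a real stable polynomial in
`z_1, …, z_{m+1}` (real coefficients, nonvanishing when all variables have positive
imaginary part).  Then `∂f/∂z_1` is either identically zero or real stable. -/
theorem real_stable_pderiv {m : ℕ} (f : MvPolynomial (Fin (m + 1)) ℝ)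
    (hf : ∀ z : Fin (m + 1) → ℂ, (∀ i, 0 < (z i).im) → MvPolynomial.aeval z f ≠ 0) :
    MvPolynomial.pderiv (0 : Fin (m + 1)) f = 0 ∨
    (∀ z : Fin (m + 1) → ℂ, (∀ i, 0 < (z i).im) →
        MvPolynomial.aeval z (MvPolynomial.pderiv (0 : Fin (m + 1)) f) ≠ 0) := by
  rcases eq_or_ne (finSuccEquiv ℝ m f).natDegree 0 with hd | hd
  · left
    apply (finSuccEquiv ℝ m).injective
    rw [finSuccEquiv_pderiv_zero, derivative_eq_zero.2 hd, map_zero]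
  · right
    intro z hz
    have hw : ∀ j, 0 < (Fin.tail z j).im := fun j ↦ hz j.succ
    have hdeg : 0 < (evalTail (Fin.tail z) f).degree := by
      rw [← natDegree_pos_iff_degree_pos, evalTail,
        natDegree_map_of_leadingCoeff_ne_zero _ (aeval_leadingCoeff_finSuccEquiv_ne_zero hf hw)]
      exact Nat.pos_of_ne_zero hd
    have := eval_derivative_ne_zero_of_forall_im_pos hdeg
      (fun t ht ↦ eval_evalTail_ne_zero hf hw ht) (hz 0)
    rwa [← evalTail_pderiv_zero, eval_evalTail, Fin.cons_self_tail] at this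
end
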